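/- arXiv:1501.04077 — 6 statements merged into one kernel-verified Lean document; each statement's English description precedes it below -/
import Mathlib

section
/- Let π : Y → X be a continuous surjection between second countable locally compact Hausdorff spaces. If there is a family of Radon measures (β^x)_{x∈X} on Y such that the support of β^x equals π⁻¹(x) for each x, and such that x ↦ ∫_Y f dβ^x is continuous for every continuous compactly supported f : Y → ℝ, then π is an open map. -/
open MeasureTheory Topology

/-- If a continuous surjection `π : Y → X` between second countable locally compact
Hausdorff spaces admits a full `π`-system of Radon measures, then `π` is open. -/
theorem stmt0 {Y X : Type*} [TopologicalSpace Y] [TopologicalSpace X]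
    [LocallyCompactSpace Y] [T2Space Y] [SecondCountableTopology Y]
    [LocallyCompactSpace X] [T2Space X] [SecondCountableTopology X]
    [MeasurableSpace Y] [BorelSpace Y]
    (π : Y → X) (hπc : Continuous π) (hπs : Function.Surjective π)
    (β : X → Measure Y)
    (hrad : ∀ x, (β x).Regular)
    (hsupp : ∀ x, β x ((π ⁻¹' {x})ᶜ) = 0)
    (hfull : ∀ x, ∀ U : Set Y, IsOpen U → (U ∩ π ⁻¹' {x}).Nonempty → 0 < β x U)
    (hcont : ∀ f : Y → ℝ, Continuous f → HasCompactSupport f →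
      Continuous fun x => ∫ y, f y ∂(β x)) :
    IsOpenMap π := by
  intro U hU
  rw [isOpen_iff_mem_nhds]
  rintro x ⟨y, hyU, rfl⟩
  -- bump function at y supported in U
  obtain ⟨f, hf1, hf0, hfc, hf01⟩ :=
    exists_continuous_one_zero_of_isCompact (isCompact_singleton (x := y))
      hU.isClosed_compl (by simpa using hyU)
  have hfnn : ∀ z, 0 ≤ f z := fun z => (hf01 z).1
  have hsuppU : Function.support f ⊆ U := by
    intro z hz
    by_contra h
    exact hz (hf0 h)
  have hsupp_open : IsOpen (Function.support f) := by
    have : Function.support f = (f : Y → ℝ) ⁻¹' {0}ᶜ := by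
      ext z; simp [Function.mem_support]
    rw [this]
    exact f.continuous.isOpen_preimage _ (isOpen_compl_singleton)
  -- key: for any x', 0 < ∫ f dβ x' ↔ support f meets fiber
  have hint : ∀ x', Integrable f (β x') := fun x' => by
    have : IsFiniteMeasureOnCompacts (β x') := (hrad x').toIsFiniteMeasureOnCompacts
    exact f.continuous.integrable_of_hasCompactSupport hfc
  have hposx : 0 < ∫ z, f z ∂(β (π y)) := by
    rw [integral_pos_iff_support_of_nonneg hfnn (hint _)]
    have := hfull (π y) (Function.support f) hsupp_open
      ⟨y, by simp [Function.mem_support, hf1 rfl], rfl⟩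
    exact this
  have hc := hcont f f.continuous hfc
  have hnhds : ∀ᶠ x' in nhds (π y), 0 < ∫ z, f z ∂(β x') :=
    (hc.tendsto (π y)).eventually (eventually_gt_nhds hposx)
  filter_upwards [hnhds] with x' hx'
  rw [integral_pos_iff_support_of_nonneg hfnn (hint _)] at hx'
  -- support f meets π⁻¹ {x'}
  have : (Function.support f ∩ π ⁻¹' {x'}).Nonempty := by
    by_contra h
    rw [Set.not_nonempty_iff_eq_empty, ← Set.disjoint_iff_inter_eq_empty] at h
    have h := Set.disjoint_left.mp h
    exact hx'.ne' (le_antisymm ((measure_mono fun z hz => h hz).trans (hsupp x').le) bot_le)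
  obtain ⟨z, hz1, hz2⟩ := this
  exact ⟨z, hsuppU hz1, hz2⟩
end

section
/- Let π : Y → X be a continuous open surjection between second countable locally compact Hausdorff spaces. Then there exists a continuous nonnegative function φ : Y → ℝ such that φ has π-compact support (i.e., supp φ ∩ π⁻¹(K) is compact for every compact K ⊆ X) and π maps the set {y ∈ Y : φ(y) > 0} onto X. -/
open Topology Set Function

lemma tsupport_finset_sum {ι Y : Type*} [TopologicalSpace Y] (s : Finset ι) (g : ι → Y → ℝ) :
    tsupport (fun y => ∑ x ∈ s, g x y) ⊆ ⋃ x ∈ s, tsupport (g x) := by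
  apply closure_minimal _ (s.finite_toSet.isClosed_biUnion fun x _ => isClosed_tsupport _)
  intro y hy
  obtain ⟨x, hx, hne⟩ := Finset.exists_ne_zero_of_sum_ne_zero hy
  exact Set.mem_biUnion hx (subset_tsupport _ hne)

/-- Bump lemma: given a compact `A` inside an open `W` in `X`, there is a continuous
nonnegative compactly supported `g : Y → ℝ` with support over `W` whose positivity
set maps onto a superset of `A`. -/
lemma bump_level {Y X : Type*} [TopologicalSpace Y] [TopologicalSpace X]
    [LocallyCompactSpace Y] [T2Space Y]
    (π : Y → X) (hπc : Continuous π) (hπo : IsOpenMap π) (hπs : Function.Surjective π)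
    {A W : Set X} (hA : IsCompact A) (hW : IsOpen W) (hAW : A ⊆ W) :
    ∃ g : Y → ℝ, Continuous g ∧ (∀ y, 0 ≤ g y) ∧ HasCompactSupport g ∧
      tsupport g ⊆ π ⁻¹' W ∧ A ⊆ π '' {y | 0 < g y} := by
  have key : ∀ x : X, x ∈ A → ∃ g : Y → ℝ, Continuous g ∧ (∀ y, 0 ≤ g y) ∧
      HasCompactSupport g ∧ tsupport g ⊆ π ⁻¹' W ∧ x ∈ π '' {y | 0 < g y} := by
    intro x hx
    obtain ⟨y, rfl⟩ := hπs x
    have hyW : y ∈ π ⁻¹' W := hAW hx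
    obtain ⟨C, hC, hyC, hCW⟩ := exists_compact_subset (hW.preimage hπc) hyW
    obtain ⟨f, hf1, hf0, hfc, hf01⟩ :=
      exists_continuous_one_zero_of_isCompact (isCompact_singleton (x := y))
        (isClosed_compl_iff.mpr (isOpen_interior (s := C)))
        (by rw [Set.disjoint_compl_right_iff_subset]
            exact Set.singleton_subset_iff.mpr hyC)
    have hsupp : tsupport f ⊆ C := by
      have h1 : support f ⊆ interior C := by
        intro z hz
        by_contra hzc
        exact hz (hf0 hzc)
      calc tsupport f ⊆ closure (interior C) := closure_mono h1
        _ ⊆ C := closure_minimal interior_subset hC.isClosed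
    refine ⟨f, f.continuous, fun z => (hf01 z).1, hfc, hsupp.trans hCW, ?_⟩
    exact ⟨y, by simp [hf1 (mem_singleton y)], rfl⟩
  choose! g hgc hg0 hgcs hgsupp hgpos using key
  have hcover : A ⊆ ⋃ x ∈ A, π '' {y | 0 < g x y} := fun x hx =>
    mem_biUnion hx (hgpos x hx)
  obtain ⟨t, hts, htf, htc⟩ := hA.elim_finite_subcover_image
    (fun x hx => hπo _ (isOpen_lt continuous_const (hgc x hx))) hcover
  classical
  refine ⟨fun y => ∑ x ∈ htf.toFinset, g x y, ?_, ?_, ?_, ?_, ?_⟩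
  · exact continuous_finset_sum _ fun x hx => hgc x (hts (htf.mem_toFinset.mp hx))
  · exact fun y => Finset.sum_nonneg fun x hx => hg0 x (hts (htf.mem_toFinset.mp hx)) y
  · apply IsCompact.of_isClosed_subset
      (htf.toFinset.isCompact_biUnion fun x hx => hgcs x (hts (htf.mem_toFinset.mp hx)))
      (isClosed_tsupport _)
    exact tsupport_finset_sum _ _
  · refine (tsupport_finset_sum _ _).trans ?_
    exact Set.iUnion₂_subset fun x hx => hgsupp x (hts (htf.mem_toFinset.mp hx))
  · intro a ha
    have ha' := htc ha
    simp only [Set.mem_iUnion, Set.mem_image, Set.mem_setOf_eq] at ha'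
    obtain ⟨x, hxt, y, hy, rfl⟩ := ha'
    refine ⟨y, ?_, rfl⟩
    have hxt' : x ∈ htf.toFinset := htf.mem_toFinset.mpr hxt
    have hle : g x y ≤ ∑ x ∈ htf.toFinset, g x y :=
      Finset.single_le_sum (fun z hz => hg0 z (hts (htf.mem_toFinset.mp hz)) y) hxt'
    exact lt_of_lt_of_le hy hle

/-- A continuous open surjection between second countable locally compact Hausdorff
spaces admits a nonnegative continuous "cut-off" function with `π`-compact support
whose positivity set maps onto `X`. -/
theorem stmt1 {Y X : Type*} [TopologicalSpace Y] [TopologicalSpace X]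
    [LocallyCompactSpace Y] [T2Space Y] [SecondCountableTopology Y]
    [LocallyCompactSpace X] [T2Space X] [SecondCountableTopology X]
    (π : Y → X) (hπc : Continuous π) (hπo : IsOpenMap π) (hπs : Function.Surjective π) :
    ∃ φ : Y → ℝ, Continuous φ ∧ (∀ y, 0 ≤ φ y) ∧
      (∀ K : Set X, IsCompact K → IsCompact (tsupport φ ∩ π ⁻¹' K)) ∧
      π '' {y | 0 < φ y} = Set.univ := by
  classical
  obtain ⟨K⟩ : Nonempty (CompactExhaustion X) := ⟨CompactExhaustion.choice X⟩
  -- annuli `A n` and open neighborhoods `W n`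
  set A : ℕ → Set X := fun n =>
    Nat.rec (K 1) (fun m _ => K (m + 2) \ interior (K (m + 1))) n with hAdef
  set W : ℕ → Set X := fun n =>
    Nat.rec (interior (K 2)) (fun m _ => interior (K (m + 3)) ∩ (K m)ᶜ) n with hWdef
  have hA0 : A 0 = K 1 := rfl
  have hAs : ∀ m, A (m + 1) = K (m + 2) \ interior (K (m + 1)) := fun m => rfl
  have hW0 : W 0 = interior (K 2) := rfl
  have hWs : ∀ m, W (m + 1) = interior (K (m + 3)) ∩ (K m)ᶜ := fun m => rfl
  have hAcomp : ∀ n, IsCompact (A n) := by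
    rintro (_ | m)
    · exact K.isCompact 1
    · exact (K.isCompact (m + 2)).diff isOpen_interior
  have hWopen : ∀ n, IsOpen (W n) := by
    rintro (_ | m)
    · exact isOpen_interior
    · exact isOpen_interior.inter (K.isCompact m).isClosed.isOpen_compl
  have hAW : ∀ n, A n ⊆ W n := by
    rintro (_ | m)
    · exact K.subset_interior_succ 1
    · rintro x ⟨hx1, hx2⟩
      exact ⟨K.subset_interior_succ (m + 2) hx1,
        fun hxm => hx2 (K.subset_interior (by omega) hxm)⟩
  have hAcover : ∀ x : X, ∃ n, x ∈ A n := by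
    intro x
    rcases Nat.lt_or_ge (K.find x) 2 with h | h
    · exact ⟨0, K.subset (show K.find x ≤ 1 by omega) (K.mem_find x)⟩
    · refine ⟨K.find x - 2 + 1, ?_⟩
      rw [hAs]
      have h2 : K.find x - 2 + 2 = K.find x := by omega
      have h1 : K.find x - 2 + 1 = K.find x - 1 := by omega
      rw [h2, h1]
      refine ⟨K.mem_find x, fun hint => ?_⟩
      have hxm : x ∈ K (K.find x - 1) := interior_subset hint
      have := K.mem_iff_find_le.mp hxm
      omega
  -- disjointness of `W n` from small compacts
  have hWdisj : ∀ N n, N + 1 ≤ n → Disjoint (W n) (K N) := by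
    rintro N (_ | m) hNn
    · omega
    · rw [hWs]
      refine Set.disjoint_left.mpr fun x hx hxK => ?_
      exact hx.2 (K.subset (show N ≤ m by omega) hxK)
  -- choose bump functions for each level
  choose g hgc hg0 hgcs hgsupp hgpos using fun n =>
    bump_level π hπc hπo hπs (hAcomp n) (hWopen n) (hAW n)
  -- local finiteness of supports
  have hlf : LocallyFinite fun n => tsupport (g n) := by
    intro y
    obtain ⟨N, hN⟩ := K.exists_mem_nhds (π y)
    refine ⟨π ⁻¹' K N, hπc.continuousAt.preimage_mem_nhds hN, ?_⟩
    apply Set.Finite.subset (Set.finite_le_nat (N + 1))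
    rintro n ⟨z, hz1, hz2⟩
    show n ≤ N + 1
    by_contra hn
    have hWn : π z ∈ W n := hgsupp n hz1
    exact (hWdisj N n (by omega)).le_bot ⟨hWn, hz2⟩
  set φ : Y → ℝ := fun y => ∑ᶠ n, g n y with hφdef
  have hptfin : ∀ y, (Function.support fun n => g n y).Finite := by
    intro y
    apply Set.Finite.subset (hlf.point_finite y)
    intro n hn
    exact subset_tsupport (g n) hn
  have hφnn : ∀ y, 0 ≤ φ y := fun y => finsum_nonneg fun n => hg0 n y
  have hφge : ∀ n y, g n y ≤ φ y := fun n y =>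
    single_le_finsum n (hptfin y) fun j => hg0 j y
  refine ⟨φ, ?_, hφnn, ?_, ?_⟩
  · exact continuous_finsum hgc (hlf.subset fun n => subset_tsupport (g n))
  · -- π-compact support
    intro Kc hKc
    obtain ⟨N, hN⟩ := K.exists_superset_of_isCompact hKc
    have hsub : tsupport φ ⊆ ⋃ n, tsupport (g n) := by
      have hclosed : IsClosed (⋃ n, tsupport (g n)) :=
        hlf.isClosed_iUnion fun n => isClosed_tsupport _
      apply closure_minimal _ hclosed
      intro y hy
      have : ∃ n, g n y ≠ 0 := by
        by_contra hno
        push_neg at hno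
        exact hy (by simp only [hφdef, finsum_eq_zero_of_forall_eq_zero hno])
      obtain ⟨n, hn⟩ := this
      exact Set.mem_iUnion.mpr ⟨n, subset_tsupport _ hn⟩
    apply IsCompact.of_isClosed_subset
      (s := ⋃ n ∈ Finset.range (N + 2), tsupport (g n))
      ((Finset.range (N + 2)).isCompact_biUnion fun n _ => hgcs n)
      ((isClosed_tsupport φ).inter ((hKc.isClosed).preimage hπc))
    rintro y ⟨hy1, hy2⟩
    obtain ⟨n, hn⟩ := Set.mem_iUnion.mp (hsub hy1)
    refine Set.mem_iUnion₂.mpr ⟨n, ?_, hn⟩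
    rw [Finset.mem_range]
    by_contra hbig
    have hWn : π y ∈ W n := hgsupp n hn
    exact (hWdisj N n (by omega)).le_bot ⟨hWn, hN hy2⟩
  · -- positivity set maps onto X
    apply Set.eq_univ_of_forall
    intro x
    obtain ⟨n, hxn⟩ := hAcover x
    obtain ⟨y, hy, rfl⟩ := hgpos n hxn
    exact ⟨y, lt_of_lt_of_le hy (hφge n y), rfl⟩
end

section
/- Let G be a second countable locally compact Hausdorff group with left Haar measure λ, acting properly on a second countable locally compact Hausdorff space Z. Let β be a Radon measure on Z with full support, and let φ : Z → [0,∞) be continuous with q-compact support such that q({φ > 0}) = G\Z, where q is the orbit map. Then the measure ν defined by ν(f) = ∫_G ∫_Z f(g·z) φ(z) dβ(z) dλ(g) for f ∈ C_c(Z) is a well-defined G-invariant Radon measure on Z with support equal to Z. -/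
open MeasureTheory

/-!
The measure `ν` is the push-forward of `λ ⊗ φβ` under the action map `(g, z) ↦ g • z`, so its
invariance is the left invariance of `λ`. Properness of the action and `q`-compactness of
`supp φ` make `{(g, z) | g • z ∈ K, z ∈ supp φ}` compact for every compact `K`; since `φβ` lives
on `supp φ`, this gives both the integrability of `f (g • z) φ z` and the local finiteness of `ν`.
Finally `φβ` charges every neighbourhood of a point of `{φ > 0}`, and every orbit meets that set,
so `ν` charges every nonempty open set.
-/

section Compactness

variable {G Z : Type*} [Group G] [MulAction G Z] [TopologicalSpace G] [TopologicalSpace Z]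

lemma isCompact_smul_preimage_inter_snd_preimage
    (hproper : IsProperMap (fun p : G × Z => (p.1 • p.2, p.2))) {K S : Set Z} (hK : IsCompact K)
    (hS : ∀ C : Set (Quotient (MulAction.orbitRel G Z)), IsCompact C →
      IsCompact (S ∩ Quotient.mk (MulAction.orbitRel G Z) ⁻¹' C)) :
    IsCompact ((fun p : G × Z => p.1 • p.2) ⁻¹' K ∩ Prod.snd ⁻¹' S) := by
  convert hproper.isCompact_preimage
    (hK.prod (hS _ (hK.image continuous_quot_mk))) using 1
  ext ⟨g, z⟩
  refine ⟨fun ⟨hgz, hz⟩ => ⟨hgz, hz, g • z, hgz, Quotient.sound (MulAction.mem_orbit z g)⟩,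
    fun ⟨hgz, hz, _⟩ => ⟨hgz, hz⟩⟩

lemma hasCompactSupport_smul_mul [R1Space G] [R1Space Z] {M : Type*} [MulZeroClass M]
    (hproper : IsProperMap (fun p : G × Z => (p.1 • p.2, p.2))) {f φ : Z → M}
    (hf : HasCompactSupport f)
    (hφ : ∀ C : Set (Quotient (MulAction.orbitRel G Z)), IsCompact C →
      IsCompact (tsupport φ ∩ Quotient.mk (MulAction.orbitRel G Z) ⁻¹' C)) :
    HasCompactSupport (fun p : G × Z => f (p.1 • p.2) * φ p.2) := by
  refine HasCompactSupport.intro (isCompact_smul_preimage_inter_snd_preimage hproper hf hφ)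
    fun p hp => ?_
  rcases not_and_or.1 hp with h | h
  · rw [image_eq_zero_of_notMem_tsupport h, zero_mul]
  · rw [image_eq_zero_of_notMem_tsupport h, mul_zero]

end Compactness

section OrbitAverage

variable {G Z : Type*} [Group G] [MulAction G Z] [MeasurableSpace G] [MeasurableSpace Z]

noncomputable def orbitAverage (lam : Measure G) (μ : Measure Z) : Measure Z :=
  (lam.prod μ).map fun p => p.1 • p.2

variable [MeasurableSMul₂ G Z]

lemma measurable_smul_prod : Measurable fun p : G × Z => p.1 • p.2 :=
  measurable_fst.smul measurable_snd

lemma orbitAverage_apply (lam : Measure G) (μ : Measure Z) {s : Set Z} (hs : MeasurableSet s) :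
    orbitAverage lam μ s = lam.prod μ ((fun p : G × Z => p.1 • p.2) ⁻¹' s) :=
  Measure.map_apply measurable_smul_prod hs

lemma map_smul_orbitAverage [MeasurableMul G] (lam : Measure G) [lam.IsMulLeftInvariant]
    [SFinite lam] (μ : Measure Z) [SFinite μ] (g : G) :
    (orbitAverage lam μ).map (g • ·) = orbitAverage lam μ := by
  have hmul : Measurable (g * · : G → G) := measurable_const_mul g
  have hcomp : (g • ·) ∘ (fun p : G × Z => p.1 • p.2)
      = (fun p : G × Z => p.1 • p.2) ∘ Prod.map (g * ·) id := by
    funext p; simp [mul_smul]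
  rw [orbitAverage, Measure.map_map (measurable_const_smul g) measurable_smul_prod, hcomp,
    ← Measure.map_map measurable_smul_prod (hmul.prodMap measurable_id),
    ← Measure.map_prod_map _ _ hmul measurable_id, Measure.map_id, map_mul_left_eq_self]

lemma integral_orbitAverage_withDensity (lam : Measure G) [SFinite lam] (μ : Measure Z)
    [SFinite μ] {φ : Z → ℝ} (hφm : Measurable φ) (hφ0 : ∀ z, 0 ≤ φ z) {f : Z → ℝ}
    (hf : Measurable f) (hint : Integrable (fun p : G × Z => f (p.1 • p.2) * φ p.2) (lam.prod μ)) :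
    ∫ z, f z ∂orbitAverage lam (μ.withDensity fun z => ENNReal.ofReal (φ z))
      = ∫ g, ∫ z, f (g • z) * φ z ∂μ ∂lam := by
  rw [orbitAverage, integral_map measurable_smul_prod.aemeasurable hf.aestronglyMeasurable,
    prod_withDensity_right hφm.ennreal_ofReal,
    integral_withDensity_eq_integral_toReal_smul
      (f := fun p : G × Z => ENNReal.ofReal (φ p.2)) (by fun_prop)
      (ae_of_all _ fun _ => ENNReal.ofReal_lt_top), ← integral_prod _ hint]
  congr 1 with p
  rw [ENNReal.toReal_ofReal (hφ0 p.2), smul_eq_mul, mul_comm]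

section Topological

variable [TopologicalSpace G] [TopologicalSpace Z] [OpensMeasurableSpace Z]

lemma isFiniteMeasureOnCompacts_orbitAverage [T2Space Z]
    (hproper : IsProperMap (fun p : G × Z => (p.1 • p.2, p.2)))
    (lam : Measure G) (μ : Measure Z) [SFinite μ] [IsFiniteMeasureOnCompacts (lam.prod μ)]
    {S : Set Z} (hμS : μ Sᶜ = 0)
    (hS : ∀ C : Set (Quotient (MulAction.orbitRel G Z)), IsCompact C →
      IsCompact (S ∩ Quotient.mk (MulAction.orbitRel G Z) ⁻¹' C)) :
    IsFiniteMeasureOnCompacts (orbitAverage lam μ) := by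
  refine ⟨fun K hK => ?_⟩
  have hcover : (fun p : G × Z => p.1 • p.2) ⁻¹' K ⊆
      ((fun p : G × Z => p.1 • p.2) ⁻¹' K ∩ Prod.snd ⁻¹' S) ∪ Set.univ ×ˢ Sᶜ := by
    intro p hp
    by_cases h : p.2 ∈ S
    exacts [Or.inl ⟨hp, h⟩, Or.inr ⟨trivial, h⟩]
  rw [orbitAverage_apply lam μ hK.measurableSet]
  calc lam.prod μ ((fun p : G × Z => p.1 • p.2) ⁻¹' K)
      ≤ lam.prod μ ((fun p : G × Z => p.1 • p.2) ⁻¹' K ∩ Prod.snd ⁻¹' S)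
        + lam.prod μ (Set.univ ×ˢ Sᶜ) := (measure_mono hcover).trans (measure_union_le _ _)
    _ < ⊤ := by
      rw [Measure.prod_prod, hμS, mul_zero, add_zero]
      exact (isCompact_smul_preimage_inter_snd_preimage hproper hK hS).measure_lt_top

lemma isOpenPosMeasure_orbitAverage [ContinuousSMul G Z] (lam : Measure G) [lam.IsOpenPosMeasure]
    [SFinite lam] (μ : Measure Z) [SFinite μ] (hμ : ∀ z : Z, ∃ g : G, g • z ∈ μ.support) :
    (orbitAverage lam μ).IsOpenPosMeasure := by
  refine ⟨fun U hU ⟨z, hz⟩ => ?_⟩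
  obtain ⟨g, hg⟩ := hμ z
  have hmem : (g⁻¹, g • z) ∈ (fun p : G × Z => p.1 • p.2) ⁻¹' U := by
    simpa only [Set.mem_preimage, inv_smul_smul] using hz
  obtain ⟨V, W, hV, hW, hgV, hzW, hVW⟩ :=
    isOpen_prod_iff.1 (hU.preimage continuous_smul) _ _ hmem
  have hVW_pos : 0 < lam.prod μ (V ×ˢ W) := by
    rw [Measure.prod_prod]
    exact ENNReal.mul_pos (hV.measure_ne_zero lam ⟨_, hgV⟩)
      ((Measure.mem_support_iff_forall _).1 hg W (hW.mem_nhds hzW)).ne'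
  rw [orbitAverage_apply lam μ hU.measurableSet]
  exact (hVW_pos.trans_le (measure_mono hVW)).ne'

end Topological

end OrbitAverage

lemma mem_support_withDensity_ofReal {Z : Type*} [TopologicalSpace Z] [MeasurableSpace Z]
    [OpensMeasurableSpace Z] (μ : Measure Z) [μ.IsOpenPosMeasure] {φ : Z → ℝ}
    (hφ : Continuous φ) {z : Z} (hz : 0 < φ z) :
    z ∈ (μ.withDensity fun z => ENNReal.ofReal (φ z)).support := by
  refine (Measure.mem_support_iff_forall z).2 fun U hU => pos_iff_ne_zero.2 fun h0 => ?_
  rw [withDensity_apply_eq_zero hφ.measurable.ennreal_ofReal] at h0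
  have hopen : IsOpen (interior U ∩ {w | 0 < φ w}) :=
    isOpen_interior.inter (isOpen_lt continuous_const hφ)
  refine hopen.measure_ne_zero μ ⟨z, mem_interior_iff_mem_nhds.2 hU, hz⟩ (measure_mono_null ?_ h0)
  rintro w ⟨hwU, hw⟩
  exact ⟨ENNReal.ofReal_pos.2 hw |>.ne', interior_subset hwU⟩

lemma MulAction.exists_smul_mem_of_image_mk_eq_univ {G Z : Type*} [Group G] [MulAction G Z]
    {S : Set Z} (hS : Quotient.mk (MulAction.orbitRel G Z) '' S = Set.univ) (z : Z) :
    ∃ g : G, g • z ∈ S := by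
  obtain ⟨w, hw, hwz⟩ := hS.symm ▸ Set.mem_univ (Quotient.mk (MulAction.orbitRel G Z) z)
  obtain ⟨g, rfl⟩ := Quotient.exact hwz
  exact ⟨g, hw⟩

lemma withDensity_ofReal_compl_tsupport {Z : Type*} [TopologicalSpace Z] [MeasurableSpace Z]
    (μ : Measure Z) {φ : Z → ℝ} (hφ : Measurable φ) :
    μ.withDensity (fun z => ENNReal.ofReal (φ z)) (tsupport φ)ᶜ = 0 := by
  refine (withDensity_apply_eq_zero hφ.ennreal_ofReal).2 (measure_mono_null ?_ measure_empty)
  rintro z ⟨hz, hzφ⟩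
  exact hzφ (subset_tsupport φ fun h => hz (by simp [h]))

theorem stmt8_general {G Z : Type*} [Group G] [TopologicalSpace G] [IsTopologicalGroup G]
    [LocallyCompactSpace G] [SecondCountableTopology G]
    [MeasurableSpace G] [BorelSpace G]
    [TopologicalSpace Z] [LocallyCompactSpace Z] [T2Space Z] [SecondCountableTopology Z]
    [MeasurableSpace Z] [BorelSpace Z]
    [MulAction G Z] [ContinuousSMul G Z]
    (hproper : IsProperMap (fun p : G × Z => (p.1 • p.2, p.2)))
    (lam : Measure G) [lam.IsHaarMeasure]
    (β : Measure Z) [β.Regular]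
    (hβfull : ∀ U : Set Z, IsOpen U → U.Nonempty → 0 < β U)
    (φ : Z → ℝ) (hφc : Continuous φ) (hφ0 : ∀ z, 0 ≤ φ z)
    (hφq : ∀ C : Set (Quotient (MulAction.orbitRel G Z)), IsCompact C →
      IsCompact (tsupport φ ∩ (Quotient.mk (MulAction.orbitRel G Z)) ⁻¹' C))
    (hφsurj : Quotient.mk (MulAction.orbitRel G Z) '' {z | 0 < φ z} = Set.univ) :
    (∀ f : Z → ℝ, Continuous f → HasCompactSupport f →
      Integrable (fun p : G × Z => f (p.1 • p.2) * φ p.2) (lam.prod β)) ∧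
    ∃ ν : Measure Z, ν.Regular ∧
      (∀ f : Z → ℝ, Continuous f → HasCompactSupport f →
        ∫ z, f z ∂ν = ∫ g, ∫ z, f (g • z) * φ z ∂β ∂lam) ∧
      (∀ g : G, Measure.map (fun z => g • z) ν = ν) ∧
      (∀ U : Set Z, IsOpen U → U.Nonempty → 0 < ν U) := by
  have hint : ∀ f : Z → ℝ, Continuous f → HasCompactSupport f →
      Integrable (fun p : G × Z => f (p.1 • p.2) * φ p.2) (lam.prod β) := fun f hf hfc =>
    ((hf.comp continuous_smul).mul (hφc.comp continuous_snd)).integrable_of_hasCompactSupport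
      (hasCompactSupport_smul_mul hproper hfc hφq)
  have : β.IsOpenPosMeasure := ⟨fun U hU hne => (hβfull U hU hne).ne'⟩
  set βφ := β.withDensity fun z => ENNReal.ofReal (φ z)
  have : IsLocallyFiniteMeasure βφ := IsLocallyFiniteMeasure.withDensity_ofReal hφc
  have : IsFiniteMeasureOnCompacts (orbitAverage lam βφ) :=
    isFiniteMeasureOnCompacts_orbitAverage hproper lam βφ
      (withDensity_ofReal_compl_tsupport β hφc.measurable) hφq
  have : (orbitAverage lam βφ).IsOpenPosMeasure :=
    isOpenPosMeasure_orbitAverage lam βφ fun z =>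
      (MulAction.exists_smul_mem_of_image_mk_eq_univ hφsurj z).imp fun _ hg =>
        mem_support_withDensity_ofReal β hφc hg
  exact ⟨hint, orbitAverage lam βφ, inferInstance,
    fun f hf hfc => integral_orbitAverage_withDensity lam β hφc.measurable hφ0 hf.measurable
      (hint f hf hfc),
    map_smul_orbitAverage lam βφ, fun U hU hne => hU.measure_pos _ hne⟩

/-- Averaging a fully supported Radon measure `β` against a cut-off function `φ` over a
proper group action using Haar measure yields a well-defined invariant Radon measure with
full support. -/
theorem stmt8 {G Z : Type*} [Group G] [TopologicalSpace G] [IsTopologicalGroup G]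
    [LocallyCompactSpace G] [T2Space G] [SecondCountableTopology G]
    [MeasurableSpace G] [BorelSpace G]
    [TopologicalSpace Z] [LocallyCompactSpace Z] [T2Space Z] [SecondCountableTopology Z]
    [MeasurableSpace Z] [BorelSpace Z]
    [MulAction G Z] [ContinuousSMul G Z]
    (hproper : IsProperMap (fun p : G × Z => (p.1 • p.2, p.2)))
    (lam : Measure G) [lam.IsHaarMeasure]
    (β : Measure Z) [β.Regular]
    (hβfull : ∀ U : Set Z, IsOpen U → U.Nonempty → 0 < β U)
    (φ : Z → ℝ) (hφc : Continuous φ) (hφ0 : ∀ z, 0 ≤ φ z)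
    (hφq : ∀ C : Set (Quotient (MulAction.orbitRel G Z)), IsCompact C →
      IsCompact (tsupport φ ∩ (Quotient.mk (MulAction.orbitRel G Z)) ⁻¹' C))
    (hφsurj : Quotient.mk (MulAction.orbitRel G Z) '' {z | 0 < φ z} = Set.univ) :
    (∀ f : Z → ℝ, Continuous f → HasCompactSupport f →
      Integrable (fun p : G × Z => f (p.1 • p.2) * φ p.2) (lam.prod β)) ∧
    ∃ ν : Measure Z, ν.Regular ∧
      (∀ f : Z → ℝ, Continuous f → HasCompactSupport f →
        ∫ z, f z ∂ν = ∫ g, ∫ z, f (g • z) * φ z ∂β ∂lam) ∧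
      (∀ g : G, Measure.map (fun z => g • z) ν = ν) ∧
      (∀ U : Set Z, IsOpen U → U.Nonempty → 0 < ν U) :=
  stmt8_general hproper lam β hβfull φ hφc hφ0 hφq hφsurj
end

section
/- Let G be a locally compact group acting properly on a locally compact Hausdorff space Z, let φ : Z → [0,∞) be continuous with q-compact support (q the orbit map), and let β be a Radon measure on Z. Then for every f ∈ C_c(Z), the function Ψ(f) : G → ℝ defined by Ψ(f)(g) = ∫_Z f(g·z) φ(z) dβ(z) is continuous with compact support. -/
/-!
Every integrand `(g, z) ↦ f (g • z) * φ z` vanishes outside the set of pairs with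
`g • z ∈ tsupport f` and `z ∈ tsupport φ ∩ q⁻¹ (q (tsupport f))`, where `q` is the orbit map
(`z` and `g • z` lie in the same orbit). The second set is compact because `φ` has `q`-compact
support, so properness of `(g, z) ↦ (g • z, z)` makes the set of such pairs compact. A parametric
integral of a jointly continuous function supported in a compact subset of `G × Z` is
continuous and compactly supported in the parameter.
-/

open MeasureTheory Topology Function

section ParametricIntegral

variable {X Y E : Type*} [TopologicalSpace X] [TopologicalSpace Y] [MeasurableSpace Y]
  [NormedAddCommGroup E] [NormedSpace ℝ E]
  {μ : Measure Y} {F : X × Y → E} {P : Set (X × Y)}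

theorem continuous_integral_of_support_subset_isCompact [OpensMeasurableSpace Y]
    [IsFiniteMeasureOnCompacts μ]
    (hP : IsCompact P) (hF : Continuous F) (hFP : support F ⊆ P) :
    Continuous (fun x => ∫ y, F (x, y) ∂μ) := by
  refine continuousOn_univ.mp <| continuousOn_integral_of_compact_support
    (hP.image continuous_snd) hF.continuousOn fun x y _ hy => ?_
  by_contra hne
  exact hy ⟨(x, y), hFP hne, rfl⟩

theorem hasCompactSupport_integral_of_support_subset_isCompact [R1Space X]
    (hP : IsCompact P) (hFP : support F ⊆ P) :
    HasCompactSupport (fun x => ∫ y, F (x, y) ∂μ) := by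
  refine HasCompactSupport.intro (hP.image continuous_fst) fun x hx => ?_
  have hzero : ∀ y, F (x, y) = 0 := fun y => by
    by_contra hne
    exact hx ⟨(x, y), hFP hne, rfl⟩
  simp only [hzero, integral_zero]

end ParametricIntegral

theorem support_smul_mul_subset {G Z : Type*} [Group G] [MulAction G Z] [TopologicalSpace Z]
    (f φ : Z → ℝ) :
    support (fun p : G × Z => f (p.1 • p.2) * φ p.2) ⊆
      (fun p : G × Z => (p.1 • p.2, p.2)) ⁻¹'
        (tsupport f ×ˢ (tsupport φ ∩
          Quotient.mk (MulAction.orbitRel G Z) ⁻¹'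
            (Quotient.mk (MulAction.orbitRel G Z) '' tsupport f))) := by
  rintro ⟨g, z⟩ hne
  have hgz : g • z ∈ tsupport f := subset_tsupport f (left_ne_zero_of_mul hne)
  exact ⟨hgz, subset_tsupport φ (right_ne_zero_of_mul hne), g • z, hgz,
    Quotient.sound ⟨g, rfl⟩⟩

theorem stmt9_general {G Z : Type*} [Group G] [TopologicalSpace G] [T2Space G]
    [TopologicalSpace Z] [MeasurableSpace Z] [BorelSpace Z]
    [MulAction G Z] [ContinuousSMul G Z]
    (hproper : IsProperMap (fun p : G × Z => (p.1 • p.2, p.2)))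
    (β : Measure Z) [β.Regular]
    (φ : Z → ℝ) (hφc : Continuous φ)
    (hφq : ∀ C : Set (Quotient (MulAction.orbitRel G Z)), IsCompact C →
      IsCompact (tsupport φ ∩ (Quotient.mk (MulAction.orbitRel G Z)) ⁻¹' C))
    (f : Z → ℝ) (hfc : Continuous f) (hfs : HasCompactSupport f) :
    Continuous (fun g : G => ∫ z, f (g • z) * φ z ∂β) ∧
    HasCompactSupport (fun g : G => ∫ z, f (g • z) * φ z ∂β) := by
  have hP := hproper.isCompact_preimage (hfs.prod (hφq _ (hfs.image continuous_quot_mk)))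
  have hF : Continuous fun p : G × Z => f (p.1 • p.2) * φ p.2 := by fun_prop
  exact ⟨continuous_integral_of_support_subset_isCompact hP hF (support_smul_mul_subset f φ),
    hasCompactSupport_integral_of_support_subset_isCompact hP (support_smul_mul_subset f φ)⟩

/-- For a proper action, a cut-off function `φ` with `q`-compact support and a Radon
measure `β`, the averaged function `Ψ(f)(g) = ∫ f(g·z) φ(z) dβ(z)` is continuous with
compact support for every `f ∈ C_c(Z)`. -/
theorem stmt9 {G Z : Type*} [Group G] [TopologicalSpace G] [IsTopologicalGroup G]
    [LocallyCompactSpace G] [T2Space G]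
    [TopologicalSpace Z] [LocallyCompactSpace Z] [T2Space Z]
    [MeasurableSpace Z] [BorelSpace Z]
    [MulAction G Z] [ContinuousSMul G Z]
    (hproper : IsProperMap (fun p : G × Z => (p.1 • p.2, p.2)))
    (β : Measure Z) [β.Regular]
    (φ : Z → ℝ) (hφc : Continuous φ) (hφ0 : ∀ z, 0 ≤ φ z)
    (hφq : ∀ C : Set (Quotient (MulAction.orbitRel G Z)), IsCompact C →
      IsCompact (tsupport φ ∩ (Quotient.mk (MulAction.orbitRel G Z)) ⁻¹' C))
    (f : Z → ℝ) (hfc : Continuous f) (hfs : HasCompactSupport f) :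
    Continuous (fun g : G => ∫ z, f (g • z) * φ z ∂β) ∧
    HasCompactSupport (fun g : G => ∫ z, f (g • z) * φ z ∂β) :=
  stmt9_general hproper β φ hφc hφq f hfc hfs
end

section
/- Let π : Y → X be an open map of topological spaces and suppose (α_i) is a family of continuous functions on X subordinate to a locally finite cover, φ_i ∈ C_c(Y) nonnegative with π({φ_i > 0}) ⊇ V_i for each i, where (V_i) is a locally finite open cover of X. Then φ(y) = Σ_i φ_i(y) α_i(π(y)) defines a continuous function on Y, and for every x ∈ X there exists y ∈ π⁻¹(x) with φ(y) > 0. -/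
/-!
Since `tsupport (α i) ⊆ V i`, the `i`-th term vanishes off `π ⁻¹' V i`, and these preimages
form a locally finite family; so near every point the series is a finite sum of continuous
functions. Given `x`, some `α i x` is positive because the `α i x` sum to `1`; then `x ∈ V i`
is the image of a point `y` with `φ i y > 0`, and the nonnegative series at `y` has a positive
term.
-/

open Function Topology

section

variable {ι Y : Type*} [TopologicalSpace Y]

theorem LocallyFinite.summable_apply {M : Type*} [AddCommMonoid M] [TopologicalSpace M]
    {f : ι → Y → M} (hf : LocallyFinite fun i => support (f i)) (y : Y) :
    Summable fun i => f i y :=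
  summable_of_hasFiniteSupport (hf.point_finite y)

theorem LocallyFinite.continuous_tsum {M : Type*} [AddCommMonoid M] [TopologicalSpace M]
    [ContinuousAdd M] {f : ι → Y → M} (hc : ∀ i, Continuous (f i))
    (hf : LocallyFinite fun i => support (f i)) :
    Continuous fun y => ∑' i, f i y := by
  simpa only [tsum_eq_finsum (hf.point_finite _)] using continuous_finsum hc hf

theorem locallyFinite_support_mul_comp {X R : Type*} [TopologicalSpace X] [MulZeroClass R]
    {π : Y → X} (hπ : Continuous π) {V : ι → Set X} (hV : LocallyFinite V)
    {α : ι → X → R} (hα : ∀ i, tsupport (α i) ⊆ V i) (φ : ι → Y → R) :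
    LocallyFinite fun i => support fun y => φ i y * α i (π y) :=
  (hV.preimage_continuous hπ).subset fun i _ hy =>
    hα i (subset_tsupport _ (right_ne_zero_of_mul hy))

end

theorem HasSum.exists_pos {ι M : Type*} [AddCommMonoid M] [LinearOrder M]
    [IsOrderedAddMonoid M] [TopologicalSpace M] [OrderClosedTopology M]
    {f : ι → M} {a : M} (hf : HasSum f a) (ha : 0 < a) : ∃ i, 0 < f i := by
  by_contra! h
  exact ha.not_ge (hasSum_le h hf hasSum_zero)

theorem stmt14_general {Y X : Type*} [TopologicalSpace Y] [TopologicalSpace X]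
    (π : Y → X) (hπc : Continuous π)
    (V : ℕ → Set X)
    (hVlf : LocallyFinite V)
    (α : ℕ → X → ℝ) (hαc : ∀ i, Continuous (α i))
    (hα0 : ∀ i x, 0 ≤ α i x)
    (hαsupp : ∀ i, tsupport (α i) ⊆ V i)
    (hαsum : ∀ x, HasSum (fun i => α i x) 1)
    (φ' : ℕ → Y → ℝ) (hφc : ∀ i, Continuous (φ' i))
    (hφ0 : ∀ i y, 0 ≤ φ' i y)
    (hφV : ∀ i, V i ⊆ π '' {y | 0 < φ' i y}) :
    (∀ y, Summable fun i => φ' i y * α i (π y)) ∧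
    Continuous (fun y => ∑' i, φ' i y * α i (π y)) ∧
    (∀ x : X, ∃ y, π y = x ∧ 0 < ∑' i, φ' i y * α i (π y)) := by
  have hlf := locallyFinite_support_mul_comp hπc hVlf hαsupp φ'
  refine ⟨hlf.summable_apply, hlf.continuous_tsum fun i => (hφc i).mul ((hαc i).comp hπc),
    fun x => ?_⟩
  obtain ⟨i, hi⟩ := (hαsum x).exists_pos one_pos
  obtain ⟨y, hy, rfl⟩ := hφV i (hαsupp i (subset_tsupport _ hi.ne'))
  exact ⟨y, rfl, (hlf.summable_apply y).tsum_pos (fun j => mul_nonneg (hφ0 j y) (hα0 j _)) i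
    (mul_pos hy hi)⟩

/-- Gluing local cut-off functions `φ_i` along a partition of unity `α_i` subordinate to
a locally finite open cover of `X` yields a well-defined continuous function
`φ(y) = Σ_i φ_i(y) α_i(π(y))` whose positivity set surjects onto `X` under `π`. -/
theorem stmt14 {Y X : Type*} [TopologicalSpace Y] [TopologicalSpace X]
    [LocallyCompactSpace Y] [T2Space Y] [LocallyCompactSpace X] [T2Space X]
    (π : Y → X) (hπc : Continuous π) (hπo : IsOpenMap π) (hπs : Function.Surjective π)
    (V : ℕ → Set X) (hVo : ∀ i, IsOpen (V i)) (hVcov : (⋃ i, V i) = Set.univ)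
    (hVlf : LocallyFinite V)
    (α : ℕ → X → ℝ) (hαc : ∀ i, Continuous (α i))
    (hα0 : ∀ i x, 0 ≤ α i x) (hα1 : ∀ i x, α i x ≤ 1)
    (hαsupp : ∀ i, tsupport (α i) ⊆ V i)
    (hαsum : ∀ x, HasSum (fun i => α i x) 1)
    (φ' : ℕ → Y → ℝ) (hφc : ∀ i, Continuous (φ' i))
    (hφ0 : ∀ i y, 0 ≤ φ' i y) (hφs : ∀ i, HasCompactSupport (φ' i))
    (hφV : ∀ i, V i ⊆ π '' {y | 0 < φ' i y}) :
    (∀ y, Summable fun i => φ' i y * α i (π y)) ∧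
    Continuous (fun y => ∑' i, φ' i y * α i (π y)) ∧
    (∀ x : X, ∃ y, π y = x ∧ 0 < ∑' i, φ' i y * α i (π y)) :=
  stmt14_general π hπc V hVlf α hαc hα0 hαsupp hαsum φ' hφc hφ0 hφV
end

section
/- Let G be a second countable locally compact Hausdorff group acting freely and properly on a second countable locally compact Hausdorff space X. Then the quotient map p : X → X/G admits a full p-system: a family of Radon measures (β^{ẋ})_{ẋ ∈ X/G} on X with supp β^{ẋ} = p⁻¹(ẋ) and ẋ ↦ ∫ f dβ^{ẋ} continuous for all f ∈ C_c(X). Moreover one can take β^{ẋ} to be the pushforward of Haar measure on G under g ↦ g·x for any choice of x ∈ p⁻¹(ẋ), and this is independent of the choice of x up to the modular considerations when G is unimodular. -/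
/-! Right invariance of the Haar measure `λ` makes its pushforward under `g ↦ g • x` depend only
on the orbit of `x`. Properness of the action makes orbits closed and preimages of compact sets
under orbit maps compact, so these are Radon measures carried by the orbits. It also confines
`g ↦ f (g • x)`, for `x` in a compact neighbourhood of a point, to one compact set of `g`, so
dominated convergence gives continuity of `x ↦ ∫ f (g • x) dλ(g)`. -/

open MeasureTheory Set Pointwise

namespace ProperSMul

variable {G X : Type*} [Group G] [TopologicalSpace G] [TopologicalSpace X] [MulAction G X]
  [ProperSMul G X]

lemma isCompact_preimage_smul_left (x : X) {K : Set X} (hK : IsCompact K) :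
    IsCompact {g : G | g • x ∈ K} := by
  simpa [smul_set_singleton, singleton_inter_nonempty] using
    isCompact_setOfPred_inter_nonempty (G := G) isCompact_singleton hK (U := {x})

lemma isClosed_orbit (x : X) : IsClosed (MulAction.orbit G x) := by
  simpa [MulAction.orbit, smul_singleton, image_univ] using
    (isClosed_univ (X := G)).smul_right_of_isCompact isCompact_singleton (t := {x})

end ProperSMul

lemma MulAction.mk_preimage_singleton_mk {G X : Type*} [Group G] [MulAction G X] (x : X) :
    Quotient.mk (orbitRel G X) ⁻¹' {Quotient.mk _ x} = orbit G x := by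
  ext y
  simp only [mem_preimage, mem_singleton_iff, Quotient.eq]
  exact orbitRel_apply

lemma map_smul_eq_of_orbitRel {G X : Type*} [Group G] [MeasurableSpace G] [MeasurableMul G]
    [MeasurableSpace X] [MulAction G X] [MeasurableSMul G X] (μ : Measure G)
    [μ.IsMulRightInvariant] {a b : X} (hab : MulAction.orbitRel G X a b) :
    μ.map (· • a) = μ.map (· • b) := by
  obtain ⟨g, rfl⟩ := hab
  have : (· • g • b) = (· • b) ∘ (· * g) := by
    funext h
    simp [mul_smul]
  rw [this, ← Measure.map_map (measurable_smul_const b) (measurable_mul_const g),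
    map_mul_right_eq_self]

section OrbitMeasure

variable {G X : Type*} [Group G] [TopologicalSpace G] [MeasurableSpace G]
  [TopologicalSpace X] [MeasurableSpace X] [OpensMeasurableSpace X]
  [MulAction G X] [MeasurableSMul G X] (μ : Measure G)

lemma map_smul_apply_pos [ContinuousSMul G X] [μ.IsOpenPosMeasure] {x : X} {U : Set X}
    (hU : IsOpen U) (hUx : (U ∩ MulAction.orbit G x).Nonempty) : 0 < μ.map (· • x) U := by
  obtain ⟨_, hyU, g, rfl⟩ := hUx
  rw [Measure.map_apply (measurable_smul_const x) hU.measurableSet]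
  exact (hU.preimage (by fun_prop)).measure_pos μ ⟨g, hyU⟩

variable [ProperSMul G X]

lemma map_smul_compl_orbit (x : X) : μ.map (· • x) (MulAction.orbit G x)ᶜ = 0 := by
  rw [Measure.map_apply (measurable_smul_const x)
    (ProperSMul.isClosed_orbit x).measurableSet.compl]
  convert measure_empty (μ := μ)
  exact eq_empty_of_forall_notMem fun g hg => hg ⟨g, rfl⟩

instance isFiniteMeasureOnCompacts_map_smul [T2Space X] [IsFiniteMeasureOnCompacts μ] (x : X) :
    IsFiniteMeasureOnCompacts (μ.map (· • x)) where
  lt_top_of_isCompact K hK := by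
    rw [Measure.map_apply (measurable_smul_const x) hK.isClosed.measurableSet]
    exact (ProperSMul.isCompact_preimage_smul_left x hK).measure_lt_top

end OrbitMeasure

lemma continuous_integral_comp_smul {G X E : Type*} [Group G] [TopologicalSpace G]
    [MeasurableSpace G] [OpensMeasurableSpace G] [TopologicalSpace X]
    [WeaklyLocallyCompactSpace X] [FirstCountableTopology X] [MulAction G X] [ProperSMul G X]
    [NormedAddCommGroup E] [NormedSpace ℝ E] [SecondCountableTopologyEither G E]
    (μ : Measure G) [IsFiniteMeasureOnCompacts μ] {f : X → E} (hf : Continuous f)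
    (hfc : HasCompactSupport f) :
    Continuous fun x => ∫ g, f (g • x) ∂μ := by
  refine continuous_iff_continuousAt.2 fun x₀ => ?_
  obtain ⟨V, hV, hV₀⟩ := exists_compact_mem_nhds x₀
  set L := {g : G | (g • V ∩ tsupport f).Nonempty}
  have hL : IsCompact L := ProperSMul.isCompact_setOfPred_inter_nonempty hV hfc
  have : IsFiniteMeasure (μ.restrict L) := ⟨by simpa using hL.measure_lt_top⟩
  obtain ⟨C, hC⟩ := hf.bounded_above_of_compact_support hfc
  have hcont : Continuous fun x => ∫ g in L, f (g • x) ∂μ :=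
    continuous_of_dominated (bound := fun _ => C)
      (fun x => (by fun_prop : Continuous fun g : G => f (g • x)).aestronglyMeasurable)
      (fun x => ae_of_all _ fun g => hC _) (integrable_const C) (ae_of_all _ fun g => by fun_prop)
  -- for `x ∈ V` the integrand vanishes off the compact set `L`
  refine hcont.continuousAt.congr ?_
  filter_upwards [hV₀] with x hx
  exact setIntegral_eq_integral_of_forall_compl_eq_zero fun g hg =>
    image_eq_zero_of_notMem_tsupport fun h => hg ⟨g • x, smul_mem_smul_set hx, h⟩

theorem stmt17_general {G X : Type*} [Group G] [TopologicalSpace G] [IsTopologicalGroup G]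
    [MeasurableSpace G] [BorelSpace G]
    [TopologicalSpace X] [LocallyCompactSpace X] [T2Space X] [SecondCountableTopology X]
    [MeasurableSpace X] [BorelSpace X]
    [MulAction G X]
    (hproper : IsProperMap (fun p : G × X => (p.1 • p.2, p.2)))
    (lam : Measure G) [lam.IsHaarMeasure] [lam.IsMulRightInvariant] :
    ∃ β : Quotient (MulAction.orbitRel G X) → Measure X,
      (∀ x : X, β (Quotient.mk (MulAction.orbitRel G X) x) =
        Measure.map (fun g : G => g • x) lam) ∧
      (∀ q, (β q).Regular) ∧
      (∀ q, β q (((Quotient.mk (MulAction.orbitRel G X)) ⁻¹' {q})ᶜ) = 0) ∧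
      (∀ q, ∀ U : Set X, IsOpen U →
        (U ∩ (Quotient.mk (MulAction.orbitRel G X)) ⁻¹' {q}).Nonempty → 0 < β q U) ∧
      (∀ f : X → ℝ, Continuous f → HasCompactSupport f →
        Continuous fun q => ∫ x, f x ∂(β q)) := by
  have : ProperSMul G X := ⟨hproper⟩
  refine ⟨Quotient.lift (fun x => lam.map (· • x)) fun _ _ => map_smul_eq_of_orbitRel lam,
    fun x => rfl, ?_, ?_, ?_, ?_⟩
  · refine Quotient.ind fun x => ?_
    exact (inferInstance : (lam.map (· • x)).Regular)
  · refine Quotient.ind fun x => ?_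
    simpa only [Quotient.lift_mk, MulAction.mk_preimage_singleton_mk] using
      map_smul_compl_orbit lam x
  · refine Quotient.ind fun x U hU hUx => ?_
    rw [MulAction.mk_preimage_singleton_mk] at hUx
    exact map_smul_apply_pos lam hU hUx
  · intro f hf hfc
    refine (isQuotientMap_quotient_mk').continuous_iff.mpr ?_
    have hint (x : X) : ∫ y, f y ∂(lam.map (· • x)) = ∫ g, f (g • x) ∂lam :=
      integral_map (by fun_prop) hf.aestronglyMeasurable
    simpa only [Function.comp_def, Quotient.mk', Quotient.lift_mk, hint] using
      continuous_integral_comp_smul lam hf hfc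

/-- For a free and proper action of a second countable locally compact unimodular group
`G` on a second countable locally compact Hausdorff space `X`, the orbit map admits a
full system of Radon measures, given on each orbit by the pushforward of Haar measure
under `g ↦ g • x` (independently of the choice of `x` in the orbit). -/
theorem stmt17 {G X : Type*} [Group G] [TopologicalSpace G] [IsTopologicalGroup G]
    [LocallyCompactSpace G] [T2Space G] [SecondCountableTopology G]
    [MeasurableSpace G] [BorelSpace G]
    [TopologicalSpace X] [LocallyCompactSpace X] [T2Space X] [SecondCountableTopology X]
    [MeasurableSpace X] [BorelSpace X]
    [MulAction G X] [ContinuousSMul G X]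
    (hfree : ∀ (g : G) (x : X), g • x = x → g = 1)
    (hproper : IsProperMap (fun p : G × X => (p.1 • p.2, p.2)))
    (lam : Measure G) [lam.IsHaarMeasure] [lam.IsMulRightInvariant] :
    ∃ β : Quotient (MulAction.orbitRel G X) → Measure X,
      (∀ x : X, β (Quotient.mk (MulAction.orbitRel G X) x) =
        Measure.map (fun g : G => g • x) lam) ∧
      (∀ q, (β q).Regular) ∧
      (∀ q, β q (((Quotient.mk (MulAction.orbitRel G X)) ⁻¹' {q})ᶜ) = 0) ∧
      (∀ q, ∀ U : Set X, IsOpen U →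
        (U ∩ (Quotient.mk (MulAction.orbitRel G X)) ⁻¹' {q}).Nonempty → 0 < β q U) ∧
      (∀ f : X → ℝ, Continuous f → HasCompactSupport f →
        Continuous fun q => ∫ x, f x ∂(β q)) :=
  stmt17_general hproper lam
end
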